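/- arXiv:2105.14588 — 4 statements merged into one kernel-verified Lean document; each statement's English description precedes it below -/
import Mathlib

section
/- Let k < 0 and let r > 0. Define 𝔧(t) = cosh(√|k| t) + ((1 - cosh(√|k| r))/sinh(√|k| r)) · sinh(√|k| t) for t ∈ [0, r]. Then ∫₀^r (𝔧'(t)² − k·𝔧(t)²) dt = 2√|k| · tanh(√|k| r / 2), i.e., the one-dimensional index-form integral of 𝔧 equals G(k, r). -/
open Real

/-! The comparison function solves the Jacobi equation `𝔧'' + k 𝔧 = 0`, so `𝔧 𝔧'` is an
antiderivative of the index-form integrand and the integral is the boundary term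
`𝔧(r) 𝔧'(r) - 𝔧(0) 𝔧'(0)`. With `x = √|k| r` and `A = (1 - cosh x) / sinh x` one has
`𝔧(0) = 𝔧(r) = 1`, and the boundary term `√|k| (sinh x + A (cosh x - 1))` simplifies to
`2 √|k| tanh (x / 2)` by the half-angle formula. -/

namespace Real

theorem tanh_half (x : ℝ) : tanh (x / 2) = (cosh x - 1) / sinh x := by
  obtain ⟨y, rfl⟩ : ∃ y, x = 2 * y := ⟨x / 2, by ring⟩
  rw [mul_div_cancel_left₀ y two_ne_zero, cosh_two_mul, sinh_two_mul, cosh_sq,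
    tanh_eq_sinh_div_cosh]
  rcases eq_or_ne (sinh y) 0 with h | h
  · simp [h]
  · field_simp [(cosh_pos y).ne']
    ring

theorem sinh_add_div_mul_cosh_sub_one {x : ℝ} (hx : sinh x ≠ 0) :
    sinh x + (1 - cosh x) / sinh x * (cosh x - 1) = 2 * tanh (x / 2) := by
  rw [tanh_half]
  field_simp
  linear_combination sinh_sq x

theorem hasDerivAt_mul_cosh_add_mul_sinh (a b s t : ℝ) :
    HasDerivAt (fun u => a * cosh (s * u) + b * sinh (s * u))
      (s * b * cosh (s * t) + s * a * sinh (s * t)) t := by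
  have hlin : HasDerivAt (fun u => s * u) s t := by
    simpa using (hasDerivAt_id t).const_mul s
  exact ((hlin.cosh.const_mul a).add (hlin.sinh.const_mul b)).congr_deriv (by ring)

end Real

theorem intervalIntegral.integral_deriv_sq_sub_mul_sq_of_jacobi {f f' : ℝ → ℝ} {k : ℝ}
    (hf : ∀ t, HasDerivAt f (f' t) t) (hf' : ∀ t, HasDerivAt f' (-k * f t) t) (a b : ℝ) :
    ∫ t in a..b, (f' t ^ 2 - k * f t ^ 2) = f b * f' b - f a * f' a := by
  have hcont : Continuous fun t => f' t ^ 2 - k * f t ^ 2 := by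
    have hf_cont := continuous_iff_continuousAt.2 fun t => (hf t).continuousAt
    have hf'_cont := continuous_iff_continuousAt.2 fun t => (hf' t).continuousAt
    fun_prop
  refine integral_eq_sub_of_hasDerivAt (f := fun t => f t * f' t)
    (fun t _ => ((hf t).mul (hf' t)).congr_deriv (by ring)) (hcont.intervalIntegrable a b)

/-- For `k < 0` and `r > 0`, the one-dimensional index-form integral of the comparison
function `𝔧(t) = cosh(√|k| t) + ((1 - cosh(√|k| r))/sinh(√|k| r)) · sinh(√|k| t)`
equals `G(k, r) = 2√|k| · tanh(√|k| r / 2)`. -/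
theorem index_form_integral_neg_curvature (k r : ℝ) (hk : k < 0) (hr : 0 < r)
    (j : ℝ → ℝ)
    (hj : ∀ t, j t = Real.cosh (Real.sqrt |k| * t) +
      ((1 - Real.cosh (Real.sqrt |k| * r)) / Real.sinh (Real.sqrt |k| * r)) *
        Real.sinh (Real.sqrt |k| * t)) :
    ∫ t in (0 : ℝ)..r, ((deriv j t) ^ 2 - k * (j t) ^ 2) =
      2 * Real.sqrt |k| * Real.tanh (Real.sqrt |k| * r / 2) := by
  set s := √|k|
  set A := (1 - cosh (s * r)) / sinh (s * r)
  have hs2 : s ^ 2 = -k := by rw [sq_sqrt (abs_nonneg k), abs_of_neg hk]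
  have hsinh : sinh (s * r) ≠ 0 :=
    (sinh_pos_iff.2 (mul_pos (sqrt_pos.2 (abs_pos.2 hk.ne)) hr)).ne'
  have hj_eq : j = fun u => 1 * cosh (s * u) + A * sinh (s * u) := by
    funext u; rw [hj, one_mul]
  set j' := fun u => s * A * cosh (s * u) + s * 1 * sinh (s * u)
  have hj' : ∀ t, HasDerivAt j (j' t) t := fun t =>
    hj_eq ▸ hasDerivAt_mul_cosh_add_mul_sinh 1 A s t
  have hj'' : ∀ t, HasDerivAt j' (-k * j t) t := fun t =>
    (hasDerivAt_mul_cosh_add_mul_sinh (s * A) (s * 1) s t).congr_deriv (by rw [hj, ← hs2]; ring)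
  have hjr : j r = 1 := by rw [hj, div_mul_cancel₀ _ hsinh]; ring
  rw [funext fun t => (hj' t).deriv,
    intervalIntegral.integral_deriv_sq_sub_mul_sq_of_jacobi hj' hj'', hjr, hj]
  simp only [cosh_zero, sinh_zero, mul_zero, j']
  linear_combination s * sinh_add_div_mul_cosh_sub_one hsinh
end

section
/- Fix r > 0. The function k ↦ G(k, r) is concave on the interval (−∞, π²/r²): for all k₁, k₂ < π²/r² and all λ ∈ [0,1], one has G(λk₁ + (1−λ)k₂, r) ≥ λ·G(k₁, r) + (1−λ)·G(k₂, r). -/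
open Real

/-- The comparison function `G` from Chen–Wang:
`G(k,r) = −2√k tan(√k r/2)` for `k > 0`, `G(0,r) = 0`,
and `G(k,r) = 2√|k| tanh(√|k| r/2)` for `k < 0`. -/
noncomputable def G (k r : ℝ) : ℝ :=
  if 0 < k then -2 * Real.sqrt k * Real.tan (Real.sqrt k * r / 2)
  else if k = 0 then 0
  else 2 * Real.sqrt |k| * Real.tanh (Real.sqrt |k| * r / 2)

/-!
For `k > 0` and `k < 0` one has `G k r = ∓ 2 √y f (√y r / 2)` with `y = |k|` and `f = tan`, resp.
`f = tanh`. The function `y ↦ 2 √y f (√y r / 2)` has derivative `(r / 2) (f t / t + f' t)` at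
`t = √y r / 2`; with `f t / t` replaced by its limit `f' 0 = 1` the same expression gives the
one-sided derivatives at `y = 0`, so `G` is differentiable at `k = 0` with derivative `-r`.
As `tan` is convex on `[0, π/2)` and `tanh` is concave on `[0, ∞)`, both the secant slope `f t / t`
and `f' t` increase in `t` for `tan` and decrease for `tanh`. With the signs above this makes the
derivative of `k ↦ G k r` antitone on `(-∞, π² / r²)`, so `G` is concave there.
-/

open Set Filter

theorem ConvexOn.monotoneOn_dslope {S : Set ℝ} {f : ℝ → ℝ} {a : ℝ} (hf : ConvexOn ℝ S f)
    (ha : a ∈ S) (hd : DifferentiableAt ℝ f a) : MonotoneOn (dslope f a) S := by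
  intro x hx y hy hxy
  rcases eq_or_ne x a with rfl | hxa
  · rcases hxy.eq_or_lt with rfl | hlt
    · rfl
    rw [dslope_same, dslope_of_ne _ hlt.ne']
    exact hf.deriv_le_slope hx hy hlt hd
  rcases eq_or_ne y a with rfl | hya
  · rw [dslope_same, dslope_of_ne _ hxa, slope_comm]
    exact hf.slope_le_deriv hx hy (hxy.lt_of_ne hxa) hd
  rw [dslope_of_ne _ hxa, dslope_of_ne _ hya]
  exact hf.slope_mono ha ⟨hx, hxa⟩ ⟨hy, hya⟩ hxy

theorem ConcaveOn.antitoneOn_dslope {S : Set ℝ} {f : ℝ → ℝ} {a : ℝ} (hf : ConcaveOn ℝ S f)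
    (ha : a ∈ S) (hd : DifferentiableAt ℝ f a) : AntitoneOn (dslope f a) S := by
  intro x hx y hy hxy
  rcases eq_or_ne x a with rfl | hxa
  · rcases hxy.eq_or_lt with rfl | hlt
    · rfl
    rw [dslope_same, dslope_of_ne _ hlt.ne']
    exact hf.slope_le_deriv hx hy hlt hd
  rcases eq_or_ne y a with rfl | hya
  · rw [dslope_same, dslope_of_ne _ hxa, slope_comm]
    exact hf.deriv_le_slope hx hy (hxy.lt_of_ne hxa) hd
  rw [dslope_of_ne _ hxa, dslope_of_ne _ hya]
  exact hf.slope_anti ha ⟨hx, hxa⟩ ⟨hy, hya⟩ hxy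

namespace Real

theorem hasDerivAt_tan_one_add_tan_sq {x : ℝ} (hx : cos x ≠ 0) :
    HasDerivAt tan (1 + tan x ^ 2) x := by
  simpa [one_div, ← inv_one_add_tan_sq hx] using hasDerivAt_tan hx

theorem cos_pos_of_mem_Ico {x : ℝ} (hx : x ∈ Ico 0 (π / 2)) : 0 < cos x :=
  cos_pos_of_mem_Ioo ⟨by linarith [pi_pos, hx.1], hx.2⟩

theorem monotoneOn_one_add_tan_sq : MonotoneOn (fun x => 1 + tan x ^ 2) (Ico 0 (π / 2)) := by
  intro x hx y hy hxy
  have hx' : x ∈ Ioo (-(π / 2)) (π / 2) := ⟨by linarith [pi_pos, hx.1], hx.2⟩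
  have hy' : y ∈ Ioo (-(π / 2)) (π / 2) := ⟨by linarith [pi_pos, hy.1], hy.2⟩
  have htan : 0 ≤ tan x := tan_nonneg_of_nonneg_of_le_pi_div_two hx.1 hx.2.le
  simpa using pow_le_pow_left₀ htan (strictMonoOn_tan.monotoneOn hx' hy' hxy) 2

theorem convexOn_tan_Ico : ConvexOn ℝ (Ico 0 (π / 2)) tan := by
  have hderiv : ∀ x ∈ Ico 0 (π / 2), HasDerivAt tan (1 + tan x ^ 2) x :=
    fun x hx => hasDerivAt_tan_one_add_tan_sq (cos_pos_of_mem_Ico hx).ne'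
  refine MonotoneOn.convexOn_of_deriv (convex_Ico _ _)
    (fun x hx => (hderiv x hx).continuousAt.continuousWithinAt)
    (fun x hx => (hderiv x (interior_subset hx)).differentiableAt.differentiableWithinAt) ?_
  intro x hx y hy hxy
  rw [(hderiv x (interior_subset hx)).deriv, (hderiv y (interior_subset hy)).deriv]
  exact monotoneOn_one_add_tan_sq (interior_subset hx) (interior_subset hy) hxy

theorem hasDerivAt_tanh (x : ℝ) : HasDerivAt tanh (1 - tanh x ^ 2) x := by
  have h := (hasDerivAt_sinh x).div (hasDerivAt_cosh x) (cosh_pos x).ne'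
  rw [show sinh / cosh = tanh from funext fun y => (tanh_eq_sinh_div_cosh y).symm] at h
  refine h.congr_deriv ?_
  rw [tanh_eq_sinh_div_cosh]
  field_simp

theorem strictMono_tanh : StrictMono tanh :=
  strictMono_of_hasDerivAt_pos hasDerivAt_tanh fun x => by linarith [tanh_sq_lt_one x]

theorem tanh_nonneg {x : ℝ} (hx : 0 ≤ x) : 0 ≤ tanh x := by
  simpa using strictMono_tanh.monotone hx

theorem antitoneOn_one_sub_tanh_sq : AntitoneOn (fun x => 1 - tanh x ^ 2) (Ici 0) := by
  intro x hx y hy hxy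
  have := pow_le_pow_left₀ (tanh_nonneg hx) (strictMono_tanh.monotone hxy) 2
  dsimp only
  linarith

theorem concaveOn_tanh_Ici : ConcaveOn ℝ (Ici 0) tanh := by
  refine AntitoneOn.concaveOn_of_deriv (convex_Ici _)
    (fun x _ => (hasDerivAt_tanh x).continuousAt.continuousWithinAt)
    (fun x _ => (hasDerivAt_tanh x).differentiableAt.differentiableWithinAt) ?_
  intro x hx y hy hxy
  rw [(hasDerivAt_tanh x).deriv, (hasDerivAt_tanh y).deriv]
  exact antitoneOn_one_sub_tanh_sq (interior_subset hx) (interior_subset hy) hxy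

end Real

noncomputable def Gbranch (f : ℝ → ℝ) (r y : ℝ) : ℝ := 2 * √y * f (√y * r / 2)

noncomputable def GbranchDeriv (f f' : ℝ → ℝ) (r y : ℝ) : ℝ :=
  r / 2 * (dslope f 0 (√y * r / 2) + f' (√y * r / 2))

section Gbranch

variable {f f' : ℝ → ℝ} {r y : ℝ}

theorem Gbranch_eq_mul_dslope (hf0 : f 0 = 0) (hy : 0 ≤ y) :
    Gbranch f r y = r * y * dslope f 0 (√y * r / 2) := by
  rcases hy.eq_or_lt with rfl | hy
  · simp [Gbranch]
  rcases eq_or_ne r 0 with rfl | hr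
  · simp [Gbranch, hf0]
  have hs : √y ≠ 0 := (sqrt_pos.mpr hy).ne'
  rw [Gbranch, dslope_of_ne _ (by positivity), slope_def_field, hf0, sub_zero, sub_zero]
  field_simp
  rw [sq_sqrt hy.le, mul_comm]

theorem GbranchDeriv_zero (hf : HasDerivAt f (f' 0) 0) : GbranchDeriv f f' r 0 = r * f' 0 := by
  rw [GbranchDeriv, sqrt_zero, zero_mul, zero_div, dslope_same, hf.deriv]
  ring

theorem hasDerivAt_Gbranch (hr : r ≠ 0) (hf0 : f 0 = 0) (hy : 0 < y)
    (hf : HasDerivAt f (f' (√y * r / 2)) (√y * r / 2)) :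
    HasDerivAt (Gbranch f r) (GbranchDeriv f f' r y) y := by
  have hs : √y ≠ 0 := (sqrt_pos.mpr hy).ne'
  have hsqrt := hasDerivAt_sqrt hy.ne'
  have h := (hsqrt.const_mul 2).mul (hf.comp y ((hsqrt.mul_const r).div_const 2))
  refine h.congr_deriv ?_
  rw [Function.comp_apply, GbranchDeriv, dslope_of_ne _ (by positivity), slope_def_field, hf0]
  field_simp
  ring

theorem hasDerivWithinAt_Gbranch_zero (hf0 : f 0 = 0) (hf : HasDerivAt f (f' 0) 0) :
    HasDerivWithinAt (Gbranch f r) (GbranchDeriv f f' r 0) (Ici 0) 0 := by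
  rw [hasDerivWithinAt_iff_tendsto_slope, GbranchDeriv_zero hf]
  have hcont : ContinuousAt (fun y => r * dslope f 0 (√y * r / 2)) 0 := by
    have hd : ContinuousAt (dslope f 0) 0 := continuousAt_dslope_same.mpr hf.differentiableAt
    exact continuousAt_const.mul (hd.comp_of_eq (by fun_prop) (by simp))
  have hlim := hcont.tendsto.mono_left (nhdsWithin_le_nhds (s := Ici 0 \ {0}))
  rw [sqrt_zero, zero_mul, zero_div, dslope_same, hf.deriv] at hlim
  refine hlim.congr' (eventually_nhdsWithin_of_forall fun y hy => ?_)
  rw [slope_def_field, Gbranch_eq_mul_dslope hf0 hy.1, Gbranch_eq_mul_dslope hf0 le_rfl]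
  have hy0 : y ≠ 0 := hy.2
  simp only [mul_zero, zero_mul, sub_zero]
  field_simp

theorem hasDerivWithinAt_Gbranch (hr : r ≠ 0) (hf0 : f 0 = 0) (hy : 0 ≤ y)
    (hf : HasDerivAt f (f' (√y * r / 2)) (√y * r / 2)) :
    HasDerivWithinAt (Gbranch f r) (GbranchDeriv f f' r y) (Ici 0) y := by
  rcases hy.eq_or_lt with rfl | hy
  · exact hasDerivWithinAt_Gbranch_zero hf0 (by simpa using hf)
  · exact (hasDerivAt_Gbranch hr hf0 hy hf).hasDerivWithinAt

theorem monotone_sqrt_mul_div_two (hr : 0 ≤ r) : Monotone fun y => √y * r / 2 :=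
  fun _ _ hxy => by dsimp only; gcongr

theorem monotoneOn_GbranchDeriv {S T : Set ℝ} (hr : 0 ≤ r) (hf : ConvexOn ℝ S f) (h0 : 0 ∈ S)
    (hd : DifferentiableAt ℝ f 0) (hf' : MonotoneOn f' S)
    (hT : MapsTo (fun y => √y * r / 2) T S) : MonotoneOn (GbranchDeriv f f' r) T := by
  have ht := monotone_sqrt_mul_div_two hr
  intro x hx y hy hxy
  exact mul_le_mul_of_nonneg_left (add_le_add (hf.monotoneOn_dslope h0 hd (hT hx) (hT hy) (ht hxy))
    (hf' (hT hx) (hT hy) (ht hxy))) (by positivity)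

theorem antitoneOn_GbranchDeriv {S T : Set ℝ} (hr : 0 ≤ r) (hf : ConcaveOn ℝ S f) (h0 : 0 ∈ S)
    (hd : DifferentiableAt ℝ f 0) (hf' : AntitoneOn f' S)
    (hT : MapsTo (fun y => √y * r / 2) T S) : AntitoneOn (GbranchDeriv f f' r) T := by
  have ht := monotone_sqrt_mul_div_two hr
  intro x hx y hy hxy
  exact mul_le_mul_of_nonneg_left (add_le_add (hf.antitoneOn_dslope h0 hd (hT hx) (hT hy) (ht hxy))
    (hf' (hT hx) (hT hy) (ht hxy))) (by positivity)

end Gbranch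

theorem G_eq_neg_Gbranch_tan {k : ℝ} (r : ℝ) (hk : 0 ≤ k) : G k r = -Gbranch tan r k := by
  rcases hk.eq_or_lt with rfl | hk
  · simp [G, Gbranch]
  · simp [G, Gbranch, hk]

theorem G_eq_Gbranch_tanh {k : ℝ} (r : ℝ) (hk : k ≤ 0) : G k r = Gbranch tanh r (-k) := by
  rcases hk.eq_or_lt with rfl | hk
  · simp [G, Gbranch]
  · simp [G, Gbranch, hk.ne, not_lt.mpr hk.le, abs_of_neg hk]

noncomputable def Gderiv (r k : ℝ) : ℝ :=
  if 0 ≤ k then -GbranchDeriv tan (fun t => 1 + tan t ^ 2) r k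
  else -GbranchDeriv tanh (fun t => 1 - tanh t ^ 2) r (-k)

theorem Gderiv_of_nonpos (r : ℝ) {k : ℝ} (hk : k ≤ 0) :
    Gderiv r k = -GbranchDeriv tanh (fun t => 1 - tanh t ^ 2) r (-k) := by
  rcases hk.eq_or_lt with rfl | hk
  · rw [Gderiv, if_pos le_rfl, neg_zero,
      GbranchDeriv_zero (by simpa using hasDerivAt_tan_one_add_tan_sq (x := 0) (by simp)),
      GbranchDeriv_zero (by simpa using hasDerivAt_tanh 0)]
    simp
  · rw [Gderiv, if_neg (not_le.mpr hk)]

theorem mapsTo_sqrt_mul_div_two_Ico {r : ℝ} (hr : 0 < r) :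
    MapsTo (fun y => √y * r / 2) (Ico 0 (π ^ 2 / r ^ 2)) (Ico 0 (π / 2)) := by
  intro y hy
  have hs : √y < π / r := by
    rw [← sqrt_sq (div_pos pi_pos hr).le, div_pow]
    exact sqrt_lt_sqrt hy.1 hy.2
  refine ⟨by positivity, ?_⟩
  rw [lt_div_iff₀ hr] at hs
  linarith

theorem hasDerivWithinAt_G_Ici {r k : ℝ} (hr : 0 < r) (hk : k ∈ Ico 0 (π ^ 2 / r ^ 2)) :
    HasDerivWithinAt (G · r) (Gderiv r k) (Ici 0) k := by
  have ht := mapsTo_sqrt_mul_div_two_Ico hr hk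
  have h := (hasDerivWithinAt_Gbranch (f' := fun t => 1 + tan t ^ 2) hr.ne' tan_zero hk.1
    (hasDerivAt_tan_one_add_tan_sq (cos_pos_of_mem_Ico ht).ne')).neg
  rw [Gderiv, if_pos hk.1]
  exact h.congr (fun x hx => G_eq_neg_Gbranch_tan r hx) (G_eq_neg_Gbranch_tan r hk.1)

theorem hasDerivWithinAt_G_Iic {r k : ℝ} (hr : 0 < r) (hk : k ≤ 0) :
    HasDerivWithinAt (G · r) (Gderiv r k) (Iic 0) k := by
  have hbranch := hasDerivWithinAt_Gbranch (f' := fun t => 1 - tanh t ^ 2) hr.ne' tanh_zero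
    (neg_nonneg.mpr hk) (hasDerivAt_tanh _)
  have h := hbranch.comp k (hasDerivAt_neg k).hasDerivWithinAt
    (fun x (hx : x ≤ 0) => neg_nonneg.mpr hx)
  rw [Gderiv_of_nonpos r hk, ← mul_neg_one]
  exact h.congr (fun x hx => G_eq_Gbranch_tanh r hx) (G_eq_Gbranch_tanh r hk)

theorem hasDerivAt_G {r k : ℝ} (hr : 0 < r) (hk : k < π ^ 2 / r ^ 2) :
    HasDerivAt (G · r) (Gderiv r k) k := by
  rcases lt_trichotomy k 0 with hneg | rfl | hpos
  · exact (hasDerivWithinAt_G_Iic hr hneg.le).hasDerivAt (Iic_mem_nhds hneg)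
  · simpa using (hasDerivWithinAt_G_Iic hr le_rfl).union (hasDerivWithinAt_G_Ici hr ⟨le_rfl, hk⟩)
  · exact (hasDerivWithinAt_G_Ici hr ⟨hpos.le, hk⟩).hasDerivAt (Ici_mem_nhds hpos)

theorem antitoneOn_Gderiv {r : ℝ} (hr : 0 < r) : AntitoneOn (Gderiv r) (Iio (π ^ 2 / r ^ 2)) := by
  have hsplit : Iio (π ^ 2 / r ^ 2) = Iic 0 ∪ Ico 0 (π ^ 2 / r ^ 2) := by
    rw [Iic_union_Ico_eq_Iio (by positivity)]
  rw [hsplit]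
  refine AntitoneOn.union_right ?_ ?_ isGreatest_Iic ⟨⟨le_rfl, by positivity⟩, fun _ h => h.1⟩
  · have hanti := antitoneOn_GbranchDeriv hr.le concaveOn_tanh_Ici self_mem_Ici
      (hasDerivAt_tanh 0).differentiableAt antitoneOn_one_sub_tanh_sq
      (T := Ici 0) (fun y _ => show 0 ≤ √y * r / 2 by positivity)
    intro x hx y hy hxy
    rw [Gderiv_of_nonpos r hx, Gderiv_of_nonpos r hy, neg_le_neg_iff]
    exact hanti (neg_nonneg.mpr (mem_Iic.mp hy)) (neg_nonneg.mpr (mem_Iic.mp hx)) (neg_le_neg hxy)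
  · have hmono := monotoneOn_GbranchDeriv hr.le convexOn_tan_Ico ⟨le_rfl, by positivity⟩
      (hasDerivAt_tan_one_add_tan_sq (by simp)).differentiableAt monotoneOn_one_add_tan_sq
      (mapsTo_sqrt_mul_div_two_Ico hr)
    intro x hx y hy hxy
    rw [Gderiv, Gderiv, if_pos hx.1, if_pos hy.1, neg_le_neg_iff]
    exact hmono hx hy hxy

theorem concaveOn_G {r : ℝ} (hr : 0 < r) : ConcaveOn ℝ (Iio (π ^ 2 / r ^ 2)) (G · r) := by
  have hG : ∀ k ∈ Iio (π ^ 2 / r ^ 2), HasDerivAt (G · r) (Gderiv r k) k :=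
    fun k hk => hasDerivAt_G hr hk
  refine AntitoneOn.concaveOn_of_deriv (convex_Iio _)
    (fun k hk => (hG k hk).continuousAt.continuousWithinAt) ?_ ?_ <;> rw [interior_Iio]
  · exact fun k hk => (hG k hk).differentiableAt.differentiableWithinAt
  · intro x hx y hy hxy
    rw [(hG x hx).deriv, (hG y hy).deriv]
    exact antitoneOn_Gderiv hr hx hy hxy

/-- For fixed `r > 0`, the function `k ↦ G(k, r)` is concave on `(−∞, π²/r²)`. -/
theorem G_concave_in_k (r : ℝ) (hr : 0 < r) :
    ∀ k₁ k₂ : ℝ, k₁ < π ^ 2 / r ^ 2 → k₂ < π ^ 2 / r ^ 2 →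
      ∀ l : ℝ, 0 ≤ l → l ≤ 1 →
        l * G k₁ r + (1 - l) * G k₂ r ≤ G (l * k₁ + (1 - l) * k₂) r := by
  intro k₁ k₂ h₁ h₂ l hl₀ hl₁
  simpa using (concaveOn_G hr).2 h₁ h₂ hl₀ (sub_nonneg.mpr hl₁) (add_sub_cancel l 1)
end

section
/- Let m ≥ 2 be an integer, let k₁, k₂ be real numbers, and let r > 0 satisfy 4k₁ < π²/r² and k₂ < π²/r². Then (2m−2)·G(k₂, r) + 2·G(k₁, 2r) ≤ (2m−1)·G((4k₁ + (2m−2)k₂)/(2m−1), r). (This is the inequality showing that the Kähler drift term (2m−2)G(k₂,r) + 2G(k₁,2r) is dominated by the Riemannian drift term with the averaged Ricci lower bound 4k₁ + (2m−2)k₂ in real dimension 2m.) -/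
open Real

/-!
Put `φ k t = cos (√k t / 2)` for `k > 0` and `cosh (√(-k) t / 2)` otherwise. Then
`φ'' = -(k/4) φ` and `G k = 4 φ' / φ`, so `G k` solves the Riccati equation `G' = -k - G² / 4`
with `G k 0 = 0` wherever `φ k > 0`, i.e. where `k t² < π²`. For `c = λ a + μ b` the defect
`D = G c - λ G a - μ G b` satisfies `D' + h D = λ μ (G a - G b)² / 4 ≥ 0`, where `h` is the
logarithmic derivative of `φ c · (φ a)^λ · (φ b)^μ`; this integrating factor gives `D ≥ 0`, so
`k ↦ G k r` is concave. The theorem is this concavity at `4 k₁` and `k₂` with weights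
`1 / (2m-1)` and `(2m-2) / (2m-1)`, combined with `G (4k) r = 2 G k (2r)`.
-/

open Set

noncomputable def halfCos (k t : ℝ) : ℝ :=
  if 0 < k then cos (√k * t / 2) else cosh (√(-k) * t / 2)

noncomputable def halfCosDeriv (k t : ℝ) : ℝ :=
  if 0 < k then -(√k / 2) * sin (√k * t / 2) else √(-k) / 2 * sinh (√(-k) * t / 2)

lemma hasDerivAt_mul_div_two (s t : ℝ) : HasDerivAt (fun t => s * t / 2) (s / 2) t :=
  (((hasDerivAt_id' t).const_mul s).div_const 2).congr_deriv (by ring)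

lemma hasDerivAt_halfCos (k t : ℝ) : HasDerivAt (halfCos k) (halfCosDeriv k t) t := by
  show HasDerivAt (fun s => halfCos k s) _ t
  by_cases hk : 0 < k
  · simp only [halfCos, halfCosDeriv, hk, if_true]
    exact ((hasDerivAt_mul_div_two √k t).cos).congr_deriv (by ring)
  · simp only [halfCos, halfCosDeriv, hk, if_false]
    exact ((hasDerivAt_mul_div_two √(-k) t).cosh).congr_deriv (by ring)

lemma hasDerivAt_halfCosDeriv (k t : ℝ) :
    HasDerivAt (halfCosDeriv k) (-(k / 4) * halfCos k t) t := by
  show HasDerivAt (fun s => halfCosDeriv k s) _ t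
  by_cases hk : 0 < k
  · simp only [halfCos, halfCosDeriv, hk, if_true]
    refine (((hasDerivAt_mul_div_two √k t).sin).const_mul (-(√k / 2))).congr_deriv ?_
    have hs := Real.sq_sqrt hk.le
    linear_combination (-cos (√k * t / 2) / 4) * hs
  · simp only [halfCos, halfCosDeriv, hk, if_false]
    refine (((hasDerivAt_mul_div_two √(-k) t).sinh).const_mul (√(-k) / 2)).congr_deriv ?_
    have hs := Real.sq_sqrt (neg_nonneg.2 (not_lt.1 hk))
    linear_combination (cosh (√(-k) * t / 2) / 4) * hs

lemma G_eq_div (k t : ℝ) : G k t = 4 * halfCosDeriv k t / halfCos k t := by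
  rcases lt_trichotomy k 0 with hk | rfl | hk
  · simp only [G, halfCos, halfCosDeriv, hk.not_gt, hk.ne, if_false, abs_of_neg hk,
      tanh_eq_sinh_div_cosh]
    ring
  · simp [G, halfCos, halfCosDeriv]
  · simp only [G, halfCos, halfCosDeriv, hk, if_true, tan_eq_sin_div_cos]
    ring

lemma halfCos_pos {k t : ℝ} (h : k * t ^ 2 < π ^ 2) : 0 < halfCos k t := by
  by_cases hk : 0 < k
  · rw [halfCos, if_pos hk]
    have hsq : (√k * t) ^ 2 < π ^ 2 := by rwa [mul_pow, Real.sq_sqrt hk.le]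
    have habs := abs_lt_of_sq_lt_sq hsq pi_pos.le
    rw [abs_lt] at habs
    exact cos_pos_of_mem_Ioo ⟨by linarith, by linarith⟩
  · rw [halfCos, if_neg hk]
    exact cosh_pos _

lemma hasDerivAt_G_s8 {k t : ℝ} (h : k * t ^ 2 < π ^ 2) :
    HasDerivAt (G k) (-k - G k t ^ 2 / 4) t := by
  have hφ := (halfCos_pos h).ne'
  have hG : G k = fun s => 4 * halfCosDeriv k s / halfCos k s := funext (G_eq_div k)
  rw [G_eq_div k t, hG]
  refine (((hasDerivAt_halfCosDeriv k t).const_mul 4).div (hasDerivAt_halfCos k t)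
    hφ).congr_deriv ?_
  field_simp

lemma G_zero_right (k : ℝ) : G k 0 = 0 := by
  simp [G_eq_div, halfCosDeriv]

lemma G_four_mul (k r : ℝ) : G (4 * k) r = 2 * G k (2 * r) := by
  have hsqrt (x : ℝ) : √(4 * x) = 2 * √x := by
    rw [Real.sqrt_mul (by norm_num), show (4 : ℝ) = 2 ^ 2 by norm_num, Real.sqrt_sq two_pos.le]
  rcases lt_trichotomy k 0 with hk | rfl | hk
  · have h4 : 4 * k < 0 := by linarith
    simp only [G, hk.not_gt, hk.ne, h4.not_gt, h4.ne, if_false, abs_of_neg hk, abs_of_neg h4,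
      show -(4 * k) = 4 * -k by ring, hsqrt]
    ring_nf
  · simp [G]
  · have h4 : 0 < 4 * k := by linarith
    simp only [G, hk, h4, if_true, hsqrt]
    ring_nf

lemma nonneg_of_hasDerivAt_of_integratingFactor {D D' Φ h : ℝ → ℝ} {r : ℝ} (hr : 0 ≤ r)
    (hD : ∀ t ∈ Icc 0 r, HasDerivAt D (D' t) t) (hΦ : ∀ t ∈ Icc 0 r, HasDerivAt Φ (h t * Φ t) t)
    (hΦ_pos : ∀ t ∈ Icc 0 r, 0 < Φ t) (hD' : ∀ t ∈ Icc 0 r, 0 ≤ D' t + h t * D t)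
    (hD₀ : 0 ≤ D 0) : 0 ≤ D r := by
  have hprod (t : ℝ) (ht : t ∈ Icc 0 r) :
      HasDerivAt (fun s => D s * Φ s) (Φ t * (D' t + h t * D t)) t :=
    ((hD t ht).mul (hΦ t ht)).congr_deriv (by ring)
  have hmono : MonotoneOn (fun s => D s * Φ s) (Icc 0 r) := by
    refine monotoneOn_of_hasDerivWithinAt_nonneg (convex_Icc 0 r)
      (fun t ht => (hprod t ht).continuousAt.continuousWithinAt)
      (fun t ht => (hprod t (interior_subset ht)).hasDerivWithinAt)
      (fun t ht => ?_)
    have ht' := interior_subset ht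
    exact mul_nonneg (hΦ_pos t ht').le (hD' t ht')
  have h0 : 0 ∈ Icc 0 r := ⟨le_rfl, hr⟩
  have hr' : r ∈ Icc 0 r := ⟨hr, le_rfl⟩
  have := hmono h0 hr' hr
  exact nonneg_of_mul_nonneg_left (by nlinarith [mul_nonneg hD₀ (hΦ_pos 0 h0).le]) (hΦ_pos r hr')

lemma mul_sq_lt_of_sq_le {k t r : ℝ} (h : k * r ^ 2 < π ^ 2) (htr : t ^ 2 ≤ r ^ 2) :
    k * t ^ 2 < π ^ 2 := by
  rcases le_or_gt k 0 with hk | hk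
  · nlinarith [sq_nonneg t, pi_pos]
  · nlinarith

lemma hasDerivAt_halfCos_of_mul_sq_lt {k t : ℝ} (h : k * t ^ 2 < π ^ 2) :
    HasDerivAt (halfCos k) (G k t / 4 * halfCos k t) t := by
  refine (hasDerivAt_halfCos k t).congr_deriv ?_
  rw [G_eq_div]
  field_simp [(halfCos_pos h).ne']

lemma hasDerivAt_halfCos_rpow {k t : ℝ} (h : k * t ^ 2 < π ^ 2) (p : ℝ) :
    HasDerivAt (fun s => halfCos k s ^ p) (p * G k t / 4 * halfCos k t ^ p) t := by
  have hφ := (halfCos_pos h).ne'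
  refine ((hasDerivAt_halfCos_of_mul_sq_lt h).rpow_const (Or.inl hφ)).congr_deriv ?_
  rw [rpow_sub_one hφ]
  field_simp

theorem concaveOn_G_s8 {r : ℝ} (hr : 0 ≤ r) :
    ConcaveOn ℝ {k | k * r ^ 2 < π ^ 2} (fun k => G k r) := by
  have hconv : Convex ℝ {k : ℝ | k * r ^ 2 < π ^ 2} :=
    convex_halfSpace_lt (IsLinearMap.isLinearMap_smul' (r ^ 2)) _
  refine ⟨hconv, fun a ha b hb lam mu hlam hmu hsum => ?_⟩
  have hc := hconv ha hb hlam hmu hsum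
  simp only [smul_eq_mul] at hc ⊢
  set c := lam * a + mu * b with hc_def
  have hsq {t} (ht : t ∈ Icc 0 r) : t ^ 2 ≤ r ^ 2 := pow_le_pow_left₀ ht.1 ht.2 2
  have key := nonneg_of_hasDerivAt_of_integratingFactor hr
    (D := fun t => G c t - lam * G a t - mu * G b t)
    (Φ := fun t => halfCos c t * halfCos a t ^ lam * halfCos b t ^ mu)
    (h := fun t => (G c t + lam * G a t + mu * G b t) / 4)
    (fun t ht => (((hasDerivAt_G_s8 (mul_sq_lt_of_sq_le hc (hsq ht))).sub
      ((hasDerivAt_G_s8 (mul_sq_lt_of_sq_le ha (hsq ht))).const_mul lam)).sub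
      ((hasDerivAt_G_s8 (mul_sq_lt_of_sq_le hb (hsq ht))).const_mul mu)))
    (fun t ht => ?_) (fun t ht => ?_) (fun t ht => ?_) (by simp [G_zero_right])
  · linarith
  · have hc' := mul_sq_lt_of_sq_le hc (hsq ht)
    have ha' := mul_sq_lt_of_sq_le ha (hsq ht)
    have hb' := mul_sq_lt_of_sq_le hb (hsq ht)
    refine (((hasDerivAt_halfCos_of_mul_sq_lt hc').mul (hasDerivAt_halfCos_rpow ha' lam)).mul
      (hasDerivAt_halfCos_rpow hb' mu)).congr_deriv ?_
    simp only [Pi.mul_apply]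
    ring
  · have hpos {k} (hk : k * r ^ 2 < π ^ 2) := halfCos_pos (mul_sq_lt_of_sq_le hk (hsq ht))
    exact mul_pos (mul_pos (hpos hc) (rpow_pos_of_pos (hpos ha) _)) (rpow_pos_of_pos (hpos hb) _)
  · have hjensen : -c - G c t ^ 2 / 4 - lam * (-a - G a t ^ 2 / 4) - mu * (-b - G b t ^ 2 / 4) +
        (G c t + lam * G a t + mu * G b t) / 4 * (G c t - lam * G a t - mu * G b t) =
        lam * mu * (G a t - G b t) ^ 2 / 4 := by
      linear_combination (-(lam * G a t ^ 2 + mu * G b t ^ 2) / 4) * hsum - hc_def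
    rw [hjensen]
    positivity

/-- The Kähler drift term `(2m−2)G(k₂,r) + 2G(k₁,2r)` is dominated by the Riemannian
drift term with the averaged Ricci lower bound `4k₁ + (2m−2)k₂` in real dimension `2m`. -/
theorem kahler_drift_comparison (m : ℕ) (hm : 2 ≤ m) (k₁ k₂ r : ℝ) (hr : 0 < r)
    (h₁ : 4 * k₁ < π ^ 2 / r ^ 2) (h₂ : k₂ < π ^ 2 / r ^ 2) :
    (2 * (m : ℝ) - 2) * G k₂ r + 2 * G k₁ (2 * r) ≤
      (2 * (m : ℝ) - 1) * G ((4 * k₁ + (2 * (m : ℝ) - 2) * k₂) / (2 * (m : ℝ) - 1)) r := by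
  have hm' : (2 : ℝ) ≤ m := by exact_mod_cast hm
  set N : ℝ := 2 * (m : ℝ) - 1
  have hN : 0 < N := by linarith
  have hr2 : 0 < r ^ 2 := by positivity
  have hweight₁ : 0 ≤ 1 / N := by positivity
  have hweight₂ : 0 ≤ (N - 1) / N := div_nonneg (by linarith) hN.le
  have hconc := (concaveOn_G_s8 hr.le).2 ((lt_div_iff₀ hr2).1 h₁) ((lt_div_iff₀ hr2).1 h₂)
    hweight₁ hweight₂ (by field_simp; ring)
  simp only [smul_eq_mul] at hconc
  have hN1 : 2 * (m : ℝ) - 2 = N - 1 := by ring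
  rw [← G_four_mul, hN1]
  calc (N - 1) * G k₂ r + G (4 * k₁) r
      = N * (1 / N * G (4 * k₁) r + (N - 1) / N * G k₂ r) := by
        field_simp; ring
    _ ≤ N * G ((4 * k₁ + (N - 1) * k₂) / N) r := by
        gcongr
        convert hconc using 2
        field_simp
end

section
/- Let k > 0, let 0 < r < π/√k, and let 𝔧(t) = cos(√k t) + ((1 - cos(√k r))/sin(√k r)) · sin(√k t) for t ∈ [0, r]. Then for any C¹ function u : [0, r] → ℝ with u(0) = 𝔧(0) and u(r) = 𝔧(r), one has ∫₀^r (𝔧'(t)² − k·𝔧(t)²) dt ≤ ∫₀^r (u'(t)² − k·u(t)²) dt. -/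
open Real Set intervalIntegral

/-!
Put `φ = 𝔧'/𝔧`, which is defined on `[0, r]` because `𝔧(t) = cos(√k t - √k r/2)/cos(√k r/2)` is
positive there (this is where `r < π/√k` enters), and solves the Riccati equation
`φ' = -k - φ²` because `𝔧'' = -k 𝔧`. Completing the square gives
`u'² - k u² = (u' - φ u)² + (φ u²)'`, so the index form of `u` is at least the boundary term
`[φ u²]₀ʳ`, which depends only on the boundary values of `u`, and equality holds for `u = 𝔧`.
-/

theorem integral_sq_sub_mul_sq_eq_of_riccati {k a b : ℝ} {φ w w' : ℝ → ℝ} (hab : a ≤ b)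
    (hφ : ContinuousOn φ (Icc a b)) (hφ' : ∀ t ∈ Ioo a b, HasDerivAt φ (-k - φ t ^ 2) t)
    (hw : ContinuousOn w (Icc a b)) (hw' : ContinuousOn w' (Icc a b))
    (hderiv : ∀ t ∈ Ioo a b, HasDerivAt w (w' t) t) :
    ∫ t in a..b, (w' t ^ 2 - k * w t ^ 2) =
      (∫ t in a..b, (w' t - φ t * w t) ^ 2) + (φ b * w b ^ 2 - φ a * w a ^ 2) := by
  set D : ℝ → ℝ := fun t => (-k - φ t ^ 2) * w t ^ 2 + φ t * (2 * w t * w' t)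
  have hD : ContinuousOn D (Icc a b) :=
    ((continuousOn_const.sub (hφ.pow 2)).mul (hw.pow 2)).add
      (hφ.mul ((continuousOn_const.mul hw).mul hw'))
  have hD_int : IntervalIntegrable D MeasureTheory.volume a b :=
    hD.intervalIntegrable_of_Icc hab
  have hsq_int : IntervalIntegrable (fun t => (w' t - φ t * w t) ^ 2) MeasureTheory.volume a b :=
    ((hw'.sub (hφ.mul hw)).pow 2).intervalIntegrable_of_Icc hab
  have hFTC : ∫ t in a..b, D t = φ b * w b ^ 2 - φ a * w a ^ 2 :=
    integral_eq_sub_of_hasDeriv_right_of_le hab (hφ.mul (hw.pow 2))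
      (fun t ht => (((hφ' t ht).mul ((hderiv t ht).pow 2)).congr_deriv
        (by simp only [D, Pi.pow_apply]; ring)).hasDerivWithinAt)
      hD_int
  rw [← hFTC, ← integral_add hsq_int hD_int]
  exact integral_congr fun t _ => by ring

theorem integral_jacobi_le {k a b : ℝ} {J J' w w' : ℝ → ℝ} (hab : a ≤ b)
    (hJ : ∀ t, HasDerivAt J (J' t) t) (hJ' : ∀ t, HasDerivAt J' (-k * J t) t)
    (hJ0 : ∀ t ∈ Icc a b, J t ≠ 0)
    (hw : ContinuousOn w (Icc a b)) (hw' : ContinuousOn w' (Icc a b))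
    (hderiv : ∀ t ∈ Ioo a b, HasDerivAt w (w' t) t) (hwa : w a = J a) (hwb : w b = J b) :
    ∫ t in a..b, (J' t ^ 2 - k * J t ^ 2) ≤ ∫ t in a..b, (w' t ^ 2 - k * w t ^ 2) := by
  have hJ_cont : Continuous J := continuous_iff_continuousAt.2 fun t => (hJ t).continuousAt
  have hJ'_cont : Continuous J' := continuous_iff_continuousAt.2 fun t => (hJ' t).continuousAt
  have hJ_index : ∫ t in a..b, (J' t ^ 2 - k * J t ^ 2) = J b * J' b - J a * J' a :=
    integral_eq_sub_of_hasDerivAt (f' := fun t => J' t ^ 2 - k * J t ^ 2)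
      (fun t _ => ((hJ t).mul (hJ' t)).congr_deriv (by ring))
      (Continuous.intervalIntegrable (by fun_prop) a b)
  have hφ : ContinuousOn (fun t => J' t / J t) (Icc a b) :=
    hJ'_cont.continuousOn.div hJ_cont.continuousOn hJ0
  have hφ' : ∀ t ∈ Ioo a b, HasDerivAt (fun t => J' t / J t) (-k - (J' t / J t) ^ 2) t :=
    fun t ht => ((hJ' t).div (hJ t) (hJ0 t (Ioo_subset_Icc_self ht))).congr_deriv (by
      field_simp [hJ0 t (Ioo_subset_Icc_self ht)])
  have hboundary : ∀ t ∈ Icc a b, J' t / J t * J t ^ 2 = J t * J' t := fun t ht => by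
    field_simp [hJ0 t ht]
  rw [integral_sq_sub_mul_sq_eq_of_riccati hab hφ hφ' hw hw' hderiv, hwa, hwb,
    hboundary a (left_mem_Icc.2 hab), hboundary b (right_mem_Icc.2 hab), hJ_index]
  exact le_add_of_nonneg_left (integral_nonneg hab fun t _ => sq_nonneg _)

theorem Real.cos_half_mul_cos_add_one_sub_cos_div_sin_mul_sin {a : ℝ} (ha : sin a ≠ 0) (x : ℝ) :
    cos (a / 2) * (cos x + (1 - cos a) / sin a * sin x) = cos (x - a / 2) := by
  have hsin : sin a = 2 * sin (a / 2) * cos (a / 2) := by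
    rw [← sin_two_mul, mul_div_cancel₀ _ two_ne_zero]
  have hcos : 1 - cos a = 2 * sin (a / 2) ^ 2 := by
    have h := cos_two_mul (a / 2)
    rw [mul_div_cancel₀ _ two_ne_zero] at h
    linarith [sin_sq_add_cos_sq (a / 2)]
  have hcos_half : cos (a / 2) ≠ 0 := fun h => ha (by rw [hsin, h]; ring)
  rw [hcos, hsin, cos_sub]
  field_simp

theorem Real.cos_add_one_sub_cos_div_sin_mul_sin_pos {a x : ℝ} (ha : 0 < a) (haπ : a < π)
    (hx : 0 ≤ x) (hxa : x ≤ a) : 0 < cos x + (1 - cos a) / sin a * sin x := by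
  have hcos_half : 0 < cos (a / 2) := cos_pos_of_mem_Ioo ⟨by linarith, by linarith⟩
  refine pos_of_mul_pos_right ?_ hcos_half.le
  rw [cos_half_mul_cos_add_one_sub_cos_div_sin_mul_sin (sin_pos_of_pos_of_lt_pi ha haπ).ne']
  exact cos_pos_of_mem_Ioo ⟨by linarith, by linarith⟩

theorem Real.hasDerivAt_cos_mul_add_mul_sin_mul (s d t : ℝ) :
    HasDerivAt (fun t => cos (s * t) + d * sin (s * t))
      (s * (d * cos (s * t) - sin (s * t))) t := by
  have h : HasDerivAt (fun t => s * t) s t := by simpa using (hasDerivAt_id t).const_mul s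
  exact (h.cos.add (h.sin.const_mul d)).congr_deriv (by ring)

theorem Real.hasDerivAt_mul_mul_cos_mul_sub_sin_mul (s d t : ℝ) :
    HasDerivAt (fun t => s * (d * cos (s * t) - sin (s * t)))
      (-s ^ 2 * (cos (s * t) + d * sin (s * t))) t := by
  have h : HasDerivAt (fun t => s * t) s t := by simpa using (hasDerivAt_id t).const_mul s
  exact (((h.cos.const_mul d).sub h.sin).const_mul s).congr_deriv (by ring)

/-- Index lemma in one dimension: for `k > 0` and `0 < r < π/√k`, the comparison
function `𝔧(t) = cos(√k t) + ((1 - cos(√k r))/sin(√k r)) · sin(√k t)` minimizes the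
index-form integral `∫₀^r (u'(t)² − k u(t)²) dt` among `C¹` functions `u` on `[0, r]`
with the same boundary values. -/
theorem index_lemma_one_dimensional (k r : ℝ) (hk : 0 < k) (hr : 0 < r)
    (hr' : r < π / Real.sqrt k) (j : ℝ → ℝ)
    (hj : ∀ t, j t = Real.cos (Real.sqrt k * t) +
      ((1 - Real.cos (Real.sqrt k * r)) / Real.sin (Real.sqrt k * r)) *
        Real.sin (Real.sqrt k * t)) :
    ∀ u : ℝ → ℝ, ContDiffOn ℝ 1 u (Set.Icc 0 r) → u 0 = j 0 → u r = j r →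
      ∫ t in (0 : ℝ)..r, ((deriv j t) ^ 2 - k * (j t) ^ 2) ≤
        ∫ t in (0 : ℝ)..r, ((derivWithin u (Set.Icc 0 r) t) ^ 2 - k * (u t) ^ 2) := by
  intro u hu hu0 hur
  have hs : 0 < √k := sqrt_pos.2 hk
  have hsr : √k * r < π := by rw [lt_div_iff₀ hs] at hr'; linarith
  obtain rfl : j = fun t => cos (√k * t) + (1 - cos (√k * r)) / sin (√k * r) * sin (√k * t) :=
    funext hj
  have hj_deriv := hasDerivAt_cos_mul_add_mul_sin_mul √k ((1 - cos (√k * r)) / sin (√k * r))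
  rw [funext fun t => (hj_deriv t).deriv]
  refine integral_jacobi_le hr.le hj_deriv (fun t => ?_) (fun t ht => ?_) hu.continuousOn
    (hu.continuousOn_derivWithin (uniqueDiffOn_Icc hr) le_rfl) (fun t ht => ?_) hu0 hur
  · simpa only [sq_sqrt hk.le] using hasDerivAt_mul_mul_cos_mul_sub_sin_mul √k _ t
  · exact (cos_add_one_sub_cos_div_sin_mul_sin_pos (mul_pos hs hr) hsr
      (mul_nonneg hs.le ht.1) (mul_le_mul_of_nonneg_left ht.2 hs.le)).ne'
  · exact ((hu.differentiableOn one_ne_zero) t (Ioo_subset_Icc_self ht)).hasDerivWithinAt.hasDerivAt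
      (Icc_mem_nhds ht.1 ht.2)
end
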